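/- Let Γ be a graph, G a weighted graph on V(Γ) with edge weights d_Γ (each weight ≥ 1), and t ≥ 1. Let S be a minimal set of added edges making G+S have dilation at most t. Then for every endpoint a of an edge of S there is a vertex w in adjacent conflict in G with hop_G(w,a) ≤ t², i.e., V_S ⊆ N_G^{t²}(V_c). -/

import Mathlib

/-!
Deleting an edge `ab` of a minimal `S` destroys the dilation bound, and a failure of dilation is
always witnessed by a `Γ`-adjacent pair `s₁ s₂`, which is then in conflict in `G`. In `G ⊔ S` the
pair is joined by a walk of weight `≤ t`; that walk must use `ab`, so `Γ.dist s₁ a ≤ t`. Along a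
`Γ`-geodesic from `s₁` to `a`, every step after the last conflicting vertex `w` is bridged in `G`
by weight `≤ t`, so `w` is within weight, hence (weights being `≥ 1`) hop distance, `t²` of `a`.
-/

open SimpleGraph

/-- The weight of a walk in `G`, where each edge `uv` is weighted by the
shortest-path distance `Γ.dist u v` in the (unweighted) graph `Γ`. -/
noncomputable def walkWeight {V : Type*} (Γ G : SimpleGraph V) :
    {x y : V} → G.Walk x y → ℕ
  | x, _, .cons (v := v) _ p => Γ.dist x v + walkWeight Γ G p
  | _, _, .nil => 0

/-- Weighted shortest-path distance in `G`, with edge weights `Γ.dist`;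
`⊤` if there is no walk. -/
noncomputable def wdist {V : Type*} (Γ G : SimpleGraph V) (x y : V) : ℕ∞ :=
  ⨅ p : G.Walk x y, (walkWeight Γ G p : ℕ∞)

section

variable {V : Type*} {Γ G H : SimpleGraph V}

/-- `w ∈ V_c` in the paper. -/
def InAdjConflict (Γ G : SimpleGraph V) (t : ℕ) (w : V) : Prop :=
  ∃ y : V, Γ.Adj w y ∧ (t : ℕ∞) < wdist Γ G w y

@[simp] lemma walkWeight_nil {x : V} : walkWeight Γ G (.nil : G.Walk x x) = 0 := rfl

@[simp] lemma walkWeight_cons {x v y : V} (h : G.Adj x v) (p : G.Walk v y) :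
    walkWeight Γ G (.cons h p) = Γ.dist x v + walkWeight Γ G p := rfl

lemma walkWeight_append {x y z : V} (p : G.Walk x y) (q : G.Walk y z) :
    walkWeight Γ G (p.append q) = walkWeight Γ G p + walkWeight Γ G q := by
  induction p with
  | nil => simp
  | cons h p ih => simp [ih, Nat.add_assoc]

lemma walkWeight_transfer {x y : V} (p : G.Walk x y) (hp : ∀ e ∈ p.edges, e ∈ H.edgeSet) :
    walkWeight Γ H (p.transfer H hp) = walkWeight Γ G p := by
  induction p with
  | nil => rfl
  | cons h p ih => exact congrArg (Γ.dist _ _ + ·) (ih _)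

lemma walkWeight_reverse {x y : V} (p : G.Walk x y) :
    walkWeight Γ G p.reverse = walkWeight Γ G p := by
  induction p with
  | nil => rfl
  | cons h p ih =>
    rw [Walk.reverse_cons, walkWeight_append, ih]
    simp [Γ.dist_comm, Nat.add_comm]

lemma dist_le_walkWeight (hΓ : Γ.Connected) {x y : V} (p : G.Walk x y) :
    Γ.dist x y ≤ walkWeight Γ G p := by
  induction p with
  | nil => simp
  | cons h p ih => exact hΓ.dist_triangle.trans (Nat.add_le_add_left ih _)

lemma dist_le_walkWeight_of_mem_support [DecidableEq V] (hΓ : Γ.Connected) {x y a : V}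
    (p : G.Walk x y) (ha : a ∈ p.support) : Γ.dist x a ≤ walkWeight Γ G p := by
  calc Γ.dist x a ≤ walkWeight Γ G (p.takeUntil a ha) := dist_le_walkWeight hΓ _
    _ ≤ walkWeight Γ G ((p.takeUntil a ha).append (p.dropUntil a ha)) := by
      rw [walkWeight_append]; exact Nat.le_add_right _ _
    _ = walkWeight Γ G p := by rw [p.take_spec ha]

lemma length_le_walkWeight (hΓ : Γ.Connected) {x y : V} (p : G.Walk x y) :
    p.length ≤ walkWeight Γ G p := by
  induction p with
  | nil => simp
  | cons h p ih =>
    have : 1 ≤ Γ.dist _ _ := hΓ.pos_dist_of_ne h.ne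
    simp only [Walk.length_cons, walkWeight_cons]
    omega

lemma wdist_le_walkWeight {x y : V} (p : G.Walk x y) :
    wdist Γ G x y ≤ walkWeight Γ G p := iInf_le _ p

@[simp] lemma wdist_self (x : V) : wdist Γ G x x = 0 :=
  nonpos_iff_eq_zero.mp (wdist_le_walkWeight (Γ := Γ) (.nil : G.Walk x x))

lemma reachable_of_wdist_ne_top {x y : V} (h : wdist Γ G x y ≠ ⊤) : G.Reachable x y := by
  by_contra hxy
  have : IsEmpty (G.Walk x y) := not_nonempty_iff.mp hxy
  exact h (iInf_of_empty _)

lemma SimpleGraph.Reachable.exists_walkWeight_eq_wdist {x y : V} (h : G.Reachable x y) :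
    ∃ p : G.Walk x y, (walkWeight Γ G p : ℕ∞) = wdist Γ G x y :=
  have : Nonempty (G.Walk x y) := h
  ciInf_mem _

lemma exists_walkWeight_le_of_wdist_le {x y : V} {n : ℕ} (h : wdist Γ G x y ≤ n) :
    ∃ p : G.Walk x y, walkWeight Γ G p ≤ n := by
  obtain ⟨p, hp⟩ := (reachable_of_wdist_ne_top (ne_top_of_le_ne_top (ENat.natCast_ne_top n) h)
    ).exists_walkWeight_eq_wdist (Γ := Γ)
  exact ⟨p, by exact_mod_cast hp ▸ h⟩

lemma wdist_triangle (x y z : V) : wdist Γ G x z ≤ wdist Γ G x y + wdist Γ G y z := by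
  by_cases hxy : wdist Γ G x y = ⊤
  · simp [hxy]
  by_cases hyz : wdist Γ G y z = ⊤
  · simp [hyz]
  obtain ⟨p, hp⟩ := (reachable_of_wdist_ne_top hxy).exists_walkWeight_eq_wdist (Γ := Γ)
  obtain ⟨q, hq⟩ := (reachable_of_wdist_ne_top hyz).exists_walkWeight_eq_wdist (Γ := Γ)
  calc wdist Γ G x z ≤ walkWeight Γ G (p.append q) := wdist_le_walkWeight _
    _ = wdist Γ G x y + wdist Γ G y z := by rw [walkWeight_append, ← hp, ← hq]; push_cast; rfl

lemma wdist_comm (x y : V) : wdist Γ G x y = wdist Γ G y x := by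
  have key (u v : V) : wdist Γ G u v ≤ wdist Γ G v u := le_iInf fun p =>
    (wdist_le_walkWeight p.reverse).trans_eq (by rw [walkWeight_reverse])
  exact le_antisymm (key x y) (key y x)

lemma wdist_anti (hGH : G ≤ H) (x y : V) : wdist Γ H x y ≤ wdist Γ G x y :=
  le_iInf fun p =>
    have hp : ∀ e ∈ p.edges, e ∈ H.edgeSet := fun _ he => edgeSet_mono hGH (p.edges_subset_edgeSet he)
    (wdist_le_walkWeight (p.transfer H hp)).trans_eq (by rw [walkWeight_transfer])

lemma SimpleGraph.Walk.exists_mem_edges_notMem_edgeSet {x y : V} (p : G.Walk x y)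
    (hp : (walkWeight Γ G p : ℕ∞) < wdist Γ H x y) : ∃ e ∈ p.edges, e ∉ H.edgeSet := by
  by_contra! hsub
  exact (wdist_le_walkWeight (p.transfer H hsub)).not_gt (by rwa [walkWeight_transfer])

lemma reachable_and_dist_le_of_wdist_le (hΓ : Γ.Connected) {x y : V} {n : ℕ}
    (h : wdist Γ G x y ≤ n) : G.Reachable x y ∧ G.dist x y ≤ n := by
  obtain ⟨p, hp⟩ := exists_walkWeight_le_of_wdist_le h
  exact ⟨⟨p⟩, (G.dist_le p).trans ((length_le_walkWeight hΓ p).trans hp)⟩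

lemma wdist_le_mul_dist_of_forall_adj (hΓ : Γ.Connected) {t : ℕ}
    (hadj : ∀ x y : V, Γ.Adj x y → wdist Γ G x y ≤ t) (u v : V) :
    wdist Γ G u v ≤ t * Γ.dist u v := by
  obtain ⟨p, hp⟩ := hΓ.exists_walk_length_eq_dist u v
  rw [← hp]
  clear hp
  induction p with
  | nil => simp
  | cons h p ih =>
    calc _ ≤ _ := wdist_triangle _ _ _
      _ ≤ (t : ℕ∞) + t * p.length := add_le_add (hadj _ _ h) ih
      _ = _ := by simp only [Walk.length_cons]; push_cast; ring

lemma exists_inAdjConflict_wdist_le_or_wdist_le (t : ℕ) {x a : V} (q : Γ.Walk x a) :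
    (∃ w, InAdjConflict Γ G t w ∧ wdist Γ G w a ≤ t * q.length) ∨
      wdist Γ G x a ≤ t * q.length := by
  induction q with
  | nil => simp
  | @cons x v a hxv q ih =>
    have hlen : (t : ℕ∞) * q.length ≤ t * (q.cons hxv).length := by gcongr; simp
    rcases ih with ⟨w, hw, hwa⟩ | hva
    · exact .inl ⟨w, hw, hwa.trans hlen⟩
    by_cases hconf : (t : ℕ∞) < wdist Γ G x v
    · exact .inl ⟨v, ⟨x, hxv.symm, by rwa [wdist_comm]⟩, hva.trans hlen⟩
    · refine .inr ?_
      calc _ ≤ _ := wdist_triangle x v a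
        _ ≤ (t : ℕ∞) + t * q.length := add_le_add (not_lt.mp hconf) hva
        _ = _ := by simp only [Walk.length_cons]; push_cast; ring

lemma InAdjConflict.exists_wdist_le {t : ℕ} {x a : V} (hx : InAdjConflict Γ G t x)
    (q : Γ.Walk x a) : ∃ w, InAdjConflict Γ G t w ∧ wdist Γ G w a ≤ t * q.length :=
  (exists_inAdjConflict_wdist_le_or_wdist_le t q).elim id fun hxa => ⟨x, hx, hxa⟩

lemma exists_inAdjConflict_dist_le_of_minimal (hΓ : Γ.Connected) {S : SimpleGraph V} {t : ℕ}
    (hdil : ∀ u v : V, wdist Γ (G ⊔ S) u v ≤ t * Γ.dist u v)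
    (hmin : ∀ S' < S, ¬ ∀ u v : V, wdist Γ (G ⊔ S') u v ≤ t * Γ.dist u v)
    {a b : V} (hab : S.Adj a b) : ∃ s, InAdjConflict Γ G t s ∧ Γ.dist s a ≤ t := by
  classical
  set S' := S.deleteEdges {s(a, b)}
  have hS' : S' < S := lt_of_le_of_ne (S.deleteEdges_le _) fun h => by
    have : S'.Adj a b := h ▸ hab
    simp [S'] at this
  obtain ⟨s₁, s₂, hs, hconf⟩ : ∃ s₁ s₂, Γ.Adj s₁ s₂ ∧ (t : ℕ∞) < wdist Γ (G ⊔ S') s₁ s₂ := by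
    by_contra! h
    exact hmin S' hS' (wdist_le_mul_dist_of_forall_adj hΓ h)
  obtain ⟨p, hp⟩ := exists_walkWeight_le_of_wdist_le (n := t)
    (by simpa [dist_eq_one_iff_adj.mpr hs] using hdil s₁ s₂)
  obtain ⟨e, hep, heS'⟩ := p.exists_mem_edges_notMem_edgeSet
    ((show (walkWeight Γ _ p : ℕ∞) ≤ t by exact_mod_cast hp).trans_lt hconf)
  have he : e = s(a, b) := by
    have := p.edges_subset_edgeSet hep
    simp only [edgeSet_sup, S', edgeSet_deleteEdges, Set.mem_union, Set.mem_sdiff,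
      Set.mem_singleton_iff] at this heS'
    tauto
  subst he
  exact ⟨s₁, ⟨s₂, hs, hconf.trans_le (wdist_anti le_sup_left _ _)⟩,
    (dist_le_walkWeight_of_mem_support hΓ p (p.fst_mem_support_of_mem_edges hep)).trans hp⟩

end

theorem endpoints_near_conflicts_hop_general {V : Type*}
    (Γ G S : SimpleGraph V) (hconn : Γ.Connected) (t : ℕ)
    (hdil : ∀ u v : V, wdist Γ (G ⊔ S) u v ≤ (t : ℕ∞) * (Γ.dist u v : ℕ∞))
    (hmin : ∀ S' : SimpleGraph V, S' < S →
      ¬ (∀ u v : V, wdist Γ (G ⊔ S') u v ≤ (t : ℕ∞) * (Γ.dist u v : ℕ∞))) :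
    ∀ a : V, (∃ b, S.Adj a b) →
      ∃ w : V, (∃ y : V, Γ.Adj w y ∧ (t : ℕ∞) < wdist Γ G w y) ∧
        G.Reachable w a ∧ G.dist w a ≤ t ^ 2 := by
  rintro a ⟨b, hab⟩
  obtain ⟨s, hs, hsa⟩ := exists_inAdjConflict_dist_le_of_minimal hconn hdil hmin hab
  obtain ⟨q, hq⟩ := hconn.exists_walk_length_eq_dist s a
  obtain ⟨w, hw, hwa⟩ := hs.exists_wdist_le q
  have hlen : (t : ℕ∞) * q.length ≤ (t ^ 2 : ℕ) := by
    rw [hq, sq]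
    exact_mod_cast Nat.mul_le_mul_left t hsa
  exact ⟨w, hw, reachable_and_dist_le_of_wdist_le hconn (hwa.trans hlen)⟩

/-- Endpoints of a minimal dilation `t`-augmentation set lie within hop-distance `t²`
in `G` of some vertex in adjacent conflict: `V_S ⊆ N_G^{t²}(V_c)`. -/
theorem endpoints_near_conflicts_hop {V : Type*} [Fintype V]
    (Γ G S : SimpleGraph V) (hconn : Γ.Connected) (t : ℕ) (ht : 1 ≤ t)
    (hnonedge : ∀ x y : V, S.Adj x y → ¬ G.Adj x y)
    (hdil : ∀ u v : V, wdist Γ (G ⊔ S) u v ≤ (t : ℕ∞) * (Γ.dist u v : ℕ∞))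
    (hmin : ∀ S' : SimpleGraph V, S' < S →
      ¬ (∀ u v : V, wdist Γ (G ⊔ S') u v ≤ (t : ℕ∞) * (Γ.dist u v : ℕ∞))) :
    ∀ a : V, (∃ b, S.Adj a b) →
      ∃ w : V, (∃ y : V, Γ.Adj w y ∧ (t : ℕ∞) < wdist Γ G w y) ∧
        G.Reachable w a ∧ G.dist w a ≤ t ^ 2 :=
  endpoints_near_conflicts_hop_general Γ G S hconn t hdil hmin
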